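/- For all integers n ≥ 56 and all integers s with 0 ≤ 2s ≤ n, one has σ_n · (4/(πn))^{n/2} · Γ(1 + n/2) ≤ (n!/nⁿ) · (4/π)^s; that is, the centre-packing bound δ₂*(n) = σ_n (4/(πn))^{n/2} Γ(1+n/2) does not exceed the bound δ₁*(n) = (n!/nⁿ)(4/π)^s coming from the parallelepiped. -/

import Mathlib

/-!
The ball of radius 1 about a vertex meets the simplex inside the image of the simplex under the
homothety centred at that vertex with ratio `√(n / (2(n + 1)))`, the reciprocal of the height:
in barycentric coordinates `‖x - Vᵢ‖² = 2(1 - wᵢ)² + 2 ∑_{j ≠ i} wⱼ²`, and Cauchy–Schwarz bounds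
the last sum below by `(1 - wᵢ)² / n`. Hence `σ_n ≤ (n + 1) (n / (2(n + 1)))^{n/2}`.

Log-convexity of `Γ` together with Legendre's duplication formula gives
`Γ(1 + n/2)⁴ ≤ (n + 1) π (n!)² / (2 · 4ⁿ)`, and Stirling's lower bound `n! ≥ √(2πn) (n/e)ⁿ`
reduces the fourth power of the inequality to `(n + 1)⁵ e²ⁿ ≤ 4n π²ⁿ`, true for `n ≥ 56`.
The factor `(4/π)^s ≥ 1` is then harmless.
-/

open MeasureTheory Real Finset
open scoped InnerProductSpace Nat

/-- The Rogers ratio `vol(T)/vol(S)` for a given choice of vertices `V` of a regular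
`n`-simplex of edge length 2; when the `V i` are pairwise at distance 2 this is the
Rogers constant `σ_n`. -/
noncomputable def rogersRatio {n : ℕ} (V : Fin (n + 1) → EuclideanSpace ℝ (Fin n)) : ℝ :=
  (volume ((convexHull ℝ (Set.range V)) ∩ ⋃ i, Metric.closedBall (V i) 1)).toReal /
    (volume (convexHull ℝ (Set.range V))).toReal

lemma convexHull_range_eq_image_stdSimplex {ι E : Type*} [Fintype ι] [AddCommGroup E]
    [Module ℝ E] (V : ι → E) :
    convexHull ℝ (Set.range V) = Fintype.linearCombination ℝ V '' stdSimplex ℝ ι := by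
  classical
  have hV : V = Fintype.linearCombination ℝ V ∘ fun i j ↦ if i = j then (1 : ℝ) else 0 := by
    ext i; simp [Fintype.linearCombination_apply]
  conv_lhs => rw [hV, Set.range_comp, ← LinearMap.image_convexHull,
    convexHull_basis_eq_stdSimplex]

lemma norm_sum_smul_sq_of_inner_eq {ι E : Type*} [DecidableEq ι] [NormedAddCommGroup E]
    [InnerProductSpace ℝ E] (s : Finset ι) (u : ι → E) (w : ι → ℝ) (a b : ℝ)
    (h : ∀ j ∈ s, ∀ l ∈ s, ⟪u j, u l⟫_ℝ = a + if j = l then b else 0) :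
    ‖∑ j ∈ s, w j • u j‖ ^ 2 = a * (∑ j ∈ s, w j) ^ 2 + b * ∑ j ∈ s, w j ^ 2 := by
  rw [← real_inner_self_eq_norm_sq, sq, sum_mul_sum, mul_sum, mul_sum, ← sum_add_distrib,
    sum_inner]
  refine sum_congr rfl fun j hj ↦ ?_
  rw [inner_sum]
  calc ∑ l ∈ s, ⟪w j • u j, w l • u l⟫_ℝ
      = ∑ l ∈ s, (a * (w j * w l) + if j = l then b * w j ^ 2 else 0) := by
        refine sum_congr rfl fun l hl ↦ ?_
        rw [real_inner_smul_left, real_inner_smul_right, h j hj l hl]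
        split_ifs with hjl
        · subst hjl; ring
        · ring
    _ = _ := by rw [sum_add_distrib, sum_ite_eq, if_pos hj, ← mul_sum]

section RegularSimplex

variable {E : Type*} [NormedAddCommGroup E] [InnerProductSpace ℝ E] {n : ℕ}
  {V : Fin (n + 1) → E}

lemma inner_sub_sub_eq_of_dist_eq_two (hV : ∀ i j, i ≠ j → dist (V i) (V j) = 2)
    {i j l : Fin (n + 1)} (hj : j ≠ i) (hl : l ≠ i) :
    ⟪V j - V i, V l - V i⟫_ℝ = 2 + if j = l then 2 else 0 := by
  have hji : ‖V j - V i‖ = 2 := by rw [← dist_eq_norm, hV j i hj]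
  split_ifs with hjl
  · subst hjl
    rw [real_inner_self_eq_norm_sq, hji]; norm_num
  · have hli : ‖V l - V i‖ = 2 := by rw [← dist_eq_norm, hV l i hl]
    have hjl' : ‖V j - V l‖ = 2 := by rw [← dist_eq_norm, hV j l hjl]
    have := norm_sub_sq_real (V j - V i) (V l - V i)
    rw [sub_sub_sub_cancel_right, hji, hli, hjl'] at this
    linarith

lemma norm_sum_smul_sub_sq (hV : ∀ i j, i ≠ j → dist (V i) (V j) = 2) {w : Fin (n + 1) → ℝ}
    (hw : ∑ j, w j = 1) (i : Fin (n + 1)) :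
    ‖∑ j, w j • V j - V i‖ ^ 2 = 2 * (1 - w i) ^ 2 + 2 * ∑ j ∈ univ.erase i, w j ^ 2 := by
  have hsum : ∑ j ∈ univ.erase i, w j = 1 - w i := by
    rw [sum_erase_eq_sub (mem_univ i), hw]
  have hvec : ∑ j, w j • V j - V i = ∑ j ∈ univ.erase i, w j • (V j - V i) := by
    rw [sum_erase _ (by simp), eq_comm]
    simp_rw [smul_sub, sum_sub_distrib, ← sum_smul, hw, one_smul]
  rw [hvec, norm_sum_smul_sq_of_inner_eq _ _ w 2 2, hsum]
  intro j hj l hl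
  exact inner_sub_sub_eq_of_dist_eq_two hV (ne_of_mem_erase hj) (ne_of_mem_erase hl)

lemma one_sub_le_of_norm_sum_smul_sub_le (hV : ∀ i j, i ≠ j → dist (V i) (V j) = 2)
    {w : Fin (n + 1) → ℝ} (hw : ∑ j, w j = 1) {i : Fin (n + 1)}
    (hx : ‖∑ j, w j • V j - V i‖ ≤ 1) :
    1 - w i ≤ √(n / (2 * (n + 1))) := by
  have hcs : (1 - w i) ^ 2 ≤ n * ∑ j ∈ univ.erase i, w j ^ 2 := by
    have := sq_sum_le_card_mul_sum_sq (s := univ.erase i) (f := w)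
    rwa [sum_erase_eq_sub (mem_univ i), hw, card_erase_of_mem (mem_univ i), card_univ,
      Fintype.card_fin, Nat.add_sub_cancel] at this
  have hsq : ‖∑ j, w j • V j - V i‖ ^ 2 ≤ 1 := pow_le_one₀ (norm_nonneg _) hx
  rw [norm_sum_smul_sub_sq hV hw] at hsq
  refine (le_abs_self _).trans (abs_le_sqrt ?_)
  rw [le_div_iff₀ (by positivity)]
  nlinarith

lemma convexHull_inter_closedBall_subset_image_homothety (hn : 0 < n)
    (hV : ∀ i j, i ≠ j → dist (V i) (V j) = 2) (i : Fin (n + 1)) :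
    convexHull ℝ (Set.range V) ∩ Metric.closedBall (V i) 1 ⊆
      AffineMap.homothety (V i) √(n / (2 * (n + 1))) '' convexHull ℝ (Set.range V) := by
  set t := √((n : ℝ) / (2 * (n + 1)))
  have ht : 0 < t := sqrt_pos.2 (by positivity)
  rw [convexHull_range_eq_image_stdSimplex]
  rintro _ ⟨⟨w, ⟨hw0, hw1⟩, rfl⟩, hx⟩
  rw [Fintype.linearCombination_apply, Metric.mem_closedBall, dist_eq_norm] at hx
  have hwi : 1 - w i ≤ t := one_sub_le_of_norm_sum_smul_sub_le hV hw1 hx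
  let μ : Fin (n + 1) → ℝ := t⁻¹ • w + (1 - t⁻¹) • Pi.single i 1
  refine ⟨_, ⟨μ, ⟨fun j ↦ ?_, ?_⟩, rfl⟩, ?_⟩
  · rcases eq_or_ne j i with rfl | hji
    · have : t⁻¹ * (1 - w j) ≤ 1 := by rwa [inv_mul_le_iff₀ ht, mul_one]
      simp only [μ, Pi.add_apply, Pi.smul_apply, Pi.single_eq_same, smul_eq_mul, mul_one]
      linarith
    · simpa [μ, hji] using mul_nonneg (inv_nonneg.2 ht.le) (hw0 j)
  · simp [μ, sum_add_distrib, ← mul_sum, hw1]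
  · rw [AffineMap.homothety_apply, map_add, map_smul, map_smul,
      Fintype.linearCombination_apply_single, vsub_eq_sub, vadd_eq_add, one_smul]
    match_scalars
    · field_simp
    · field_simp; ring

lemma measure_convexHull_inter_iUnion_closedBall_le [MeasurableSpace E] [BorelSpace E]
    [FiniteDimensional ℝ E] (μ : Measure E) [μ.IsAddHaarMeasure] (hn : 0 < n)
    (hV : ∀ i j, i ≠ j → dist (V i) (V j) = 2) :
    μ (convexHull ℝ (Set.range V) ∩ ⋃ i, Metric.closedBall (V i) 1) ≤
      ENNReal.ofReal ((n + 1) * √(n / (2 * (n + 1))) ^ Module.finrank ℝ E) *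
        μ (convexHull ℝ (Set.range V)) := by
  set t := √((n : ℝ) / (2 * (n + 1)))
  have ht : 0 ≤ t ^ Module.finrank ℝ E := by positivity
  rw [Set.inter_iUnion]
  calc μ (⋃ i, convexHull ℝ (Set.range V) ∩ Metric.closedBall (V i) 1)
      ≤ ∑ i, μ (convexHull ℝ (Set.range V) ∩ Metric.closedBall (V i) 1) :=
        measure_iUnion_fintype_le _ _
    _ ≤ ∑ _i : Fin (n + 1), ENNReal.ofReal (t ^ Module.finrank ℝ E) *
          μ (convexHull ℝ (Set.range V)) := by
        refine sum_le_sum fun i _ ↦ ?_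
        refine (measure_mono
          (convexHull_inter_closedBall_subset_image_homothety hn hV i)).trans_eq ?_
        rw [Measure.addHaar_image_homothety, abs_of_nonneg ht]
    _ = _ := by
        rw [sum_const, card_univ, Fintype.card_fin, nsmul_eq_mul, ← mul_assoc,
          ENNReal.ofReal_mul (by positivity)]
        norm_cast

end RegularSimplex

lemma rogersRatio_le {n : ℕ} (hn : 0 < n) {V : Fin (n + 1) → EuclideanSpace ℝ (Fin n)}
    (hV : ∀ i j, i ≠ j → dist (V i) (V j) = 2) :
    rogersRatio V ≤ (n + 1) * √(n / (2 * (n + 1))) ^ n := by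
  have hS : volume (convexHull ℝ (Set.range V)) ≠ ⊤ :=
    ((Set.finite_range V).isCompact_convexHull ℝ).measure_ne_top
  have h := measure_convexHull_inter_iUnion_closedBall_le volume hn hV
  rw [finrank_euclideanSpace_fin] at h
  refine div_le_of_le_mul₀ ENNReal.toReal_nonneg (by positivity) ?_
  rw [← ENNReal.toReal_ofReal (by positivity : (0 : ℝ) ≤ (n + 1) * √(n / (2 * (n + 1))) ^ n),
    ← ENNReal.toReal_mul]
  exact ENNReal.toReal_mono (ENNReal.mul_ne_top ENNReal.ofReal_ne_top hS) h

lemma Gamma_one_add_pow_four_le {x : ℝ} (hx : 0 ≤ x) :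
    Gamma (1 + x) ^ 4 ≤ (x + 1 / 2) * (Gamma (2 * x + 1) * 2 ^ (-2 * x) * √π) ^ 2 := by
  have hx' : 0 < x + 1 / 2 := by linarith
  have hlogConvex : Gamma (1 + x) ^ 2 ≤ (x + 1 / 2) * Gamma (x + 1 / 2) ^ 2 := by
    have h := Gamma_mul_add_mul_le_rpow_Gamma_mul_rpow_Gamma hx' (hx'.trans (lt_add_one _))
      one_half_pos one_half_pos (add_halves 1)
    rw [show 1 / 2 * (x + 1 / 2) + 1 / 2 * (x + 1 / 2 + 1) = 1 + x by ring, ← sqrt_eq_rpow,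
      ← sqrt_eq_rpow, ← sqrt_mul (Gamma_pos_of_pos hx').le, Gamma_add_one hx'.ne'] at h
    exact ((le_sqrt (Gamma_pos_of_pos (by linarith)).le (by positivity)).1 h).trans_eq
      (by ring)
  have hduplication :
      Gamma (x + 1 / 2) * Gamma (1 + x) = Gamma (2 * x + 1) * 2 ^ (-2 * x) * √π := by
    convert Gamma_mul_Gamma_add_half (x + 1 / 2) using 2 <;> ring_nf
  calc Gamma (1 + x) ^ 4 = Gamma (1 + x) ^ 2 * Gamma (1 + x) ^ 2 := by ring
    _ ≤ (x + 1 / 2) * Gamma (x + 1 / 2) ^ 2 * Gamma (1 + x) ^ 2 := by gcongr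
    _ = _ := by rw [← hduplication]; ring

lemma Gamma_one_add_half_pow_four_le (n : ℕ) :
    Gamma (1 + n / 2) ^ 4 ≤ (n + 1) * π * (n ! : ℝ) ^ 2 / (2 * 4 ^ n) := by
  have h := Gamma_one_add_pow_four_le (x := n / 2) (by positivity)
  rw [show 2 * ((n : ℝ) / 2) + 1 = n + 1 by ring, Gamma_nat_eq_factorial,
    show -2 * ((n : ℝ) / 2) = -n by ring, rpow_neg zero_le_two, rpow_natCast] at h
  convert h using 1
  rw [mul_pow, mul_pow, sq_sqrt pi_pos.le, inv_pow, ← pow_mul, pow_mul']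
  field_simp
  norm_num

lemma sqrt_pow_mul_rpow_eq (n : ℕ) :
    √(n / (2 * (n + 1))) ^ n * (4 / (π * n)) ^ ((n : ℝ) / 2) = √(2 / (π * (n + 1))) ^ n := by
  rw [show (n : ℝ) / 2 = 1 / 2 * n by ring, rpow_mul_natCast (by positivity), ← sqrt_eq_rpow,
    ← mul_pow, ← sqrt_mul (by positivity)]
  rcases Nat.eq_zero_or_pos n with rfl | hn
  · simp
  · congr 2
    field_simp
    ring

lemma add_one_pow_five_mul_exp_le {n : ℕ} (hn : 56 ≤ n) :
    ((n : ℝ) + 1) ^ 5 * exp 1 ^ (2 * n) ≤ 4 * n * π ^ (2 * n) := by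
  induction n, hn using Nat.le_induction with
  | base =>
    have he : exp 1 ≤ 2.7182818286 := exp_one_lt_d9.le
    have hπ : 3.141592 ≤ π := pi_gt_d6.le
    rw [show ((56 : ℕ) : ℝ) = 56 by norm_num]
    calc ((56 : ℝ) + 1) ^ 5 * exp 1 ^ (2 * 56) ≤ (56 + 1) ^ 5 * 2.7182818286 ^ (2 * 56) := by
          gcongr
      _ ≤ 4 * 56 * 3.141592 ^ (2 * 56) := by norm_num
      _ ≤ 4 * 56 * π ^ (2 * 56) := by gcongr
  | succ m hm ih =>
    have hstep : exp 1 ^ 2 * (((m : ℝ) + 2) ^ 5 * m) ≤ π ^ 2 * ((m : ℝ) + 1) ^ 6 := by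
      have hconst : 5 * exp 1 ^ 2 ≤ 4 * π ^ 2 := by
        nlinarith [exp_one_lt_d9, pi_gt_d2, exp_pos 1]
      have hpoly : 4 * (((m : ℝ) + 2) ^ 5 * m) ≤ 5 * ((m : ℝ) + 1) ^ 6 := by
        obtain ⟨k, rfl⟩ := Nat.exists_eq_add_of_le hm
        have hk : (0 : ℝ) ≤ k := k.cast_nonneg
        push_cast
        ring_nf
        linarith [pow_nonneg hk 2, pow_nonneg hk 3, pow_nonneg hk 4, pow_nonneg hk 5,
          pow_nonneg hk 6]
      linarith [mul_le_mul_of_nonneg_left hpoly (sq_nonneg (exp 1)),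
        mul_le_mul_of_nonneg_right hconst (by positivity : (0 : ℝ) ≤ ((m : ℝ) + 1) ^ 6)]
    have hm1 : (0 : ℝ) < ((m : ℝ) + 1) ^ 5 := by positivity
    refine le_of_mul_le_mul_left ?_ hm1
    push_cast
    calc ((m : ℝ) + 1) ^ 5 * (((m : ℝ) + 1 + 1) ^ 5 * exp 1 ^ (2 * (m + 1)))
        = exp 1 ^ 2 * ((m : ℝ) + 2) ^ 5 * (((m : ℝ) + 1) ^ 5 * exp 1 ^ (2 * m)) := by ring
      _ ≤ exp 1 ^ 2 * ((m : ℝ) + 2) ^ 5 * (4 * m * π ^ (2 * m)) := by gcongr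
      _ = 4 * π ^ (2 * m) * (exp 1 ^ 2 * (((m : ℝ) + 2) ^ 5 * m)) := by ring
      _ ≤ 4 * π ^ (2 * m) * (π ^ 2 * ((m : ℝ) + 1) ^ 6) := by gcongr
      _ = ((m : ℝ) + 1) ^ 5 * (4 * ((m : ℝ) + 1) * π ^ (2 * (m + 1))) := by ring

lemma add_one_mul_sqrt_pow_mul_Gamma_le {n : ℕ} (hn : 56 ≤ n) :
    (n + 1) * √(2 / (π * (n + 1))) ^ n * Gamma (1 + n / 2) ≤ n ! / (n : ℝ) ^ n := by
  have hn0 : (0 : ℝ) < n := by exact_mod_cast (by omega : 0 < n)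
  have hGamma : 0 ≤ Gamma (1 + n / 2) := (Gamma_pos_of_pos (by positivity)).le
  have hstirling : 2 * π * n / (exp 1 * n) ^ (2 * n) ≤ (n ! : ℝ) ^ 2 / (n : ℝ) ^ (4 * n) := by
    calc 2 * π * n / (exp 1 * n) ^ (2 * n)
        = (√(2 * π * n) * (n / exp 1) ^ n) ^ 2 / (n : ℝ) ^ (4 * n) := by
          rw [mul_pow (√(2 * π * n)), sq_sqrt (by positivity), div_pow]
          field_simp
          ring
      _ ≤ (n ! : ℝ) ^ 2 / (n : ℝ) ^ (4 * n) := by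
          gcongr
          exact Stirling.le_factorial_stirling n
  have hnumeric : ((n : ℝ) + 1) ^ 5 * π / (2 * (π * (n + 1)) ^ (2 * n)) ≤
      2 * π * n / (exp 1 * n) ^ (2 * n) := by
    rw [div_le_div_iff₀ (by positivity) (by positivity), mul_pow, mul_pow]
    calc ((n : ℝ) + 1) ^ 5 * π * (exp 1 ^ (2 * n) * (n : ℝ) ^ (2 * n))
        = ((n : ℝ) + 1) ^ 5 * exp 1 ^ (2 * n) * (π * (n : ℝ) ^ (2 * n)) := by ring
      _ ≤ 4 * n * π ^ (2 * n) * (π * ((n : ℝ) + 1) ^ (2 * n)) := by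
          gcongr ?_ * (π * ?_)
          · exact add_one_pow_five_mul_exp_le hn
          · exact pow_le_pow_left₀ hn0.le (by linarith) _
      _ = 2 * π * n * (2 * (π ^ (2 * n) * ((n : ℝ) + 1) ^ (2 * n))) := by ring
  rw [← pow_le_pow_iff_left₀ (by positivity) (by positivity) four_ne_zero]
  calc ((n + 1) * √(2 / (π * (n + 1))) ^ n * Gamma (1 + n / 2)) ^ 4
      = ((n : ℝ) + 1) ^ 4 * (2 / (π * (n + 1))) ^ (2 * n) * Gamma (1 + n / 2) ^ 4 := by
        rw [mul_pow, mul_pow, ← pow_mul, show n * 4 = 2 * (2 * n) by ring, pow_mul,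
          sq_sqrt (by positivity)]
    _ ≤ ((n : ℝ) + 1) ^ 4 * (2 / (π * (n + 1))) ^ (2 * n) *
          ((n + 1) * π * (n ! : ℝ) ^ 2 / (2 * 4 ^ n)) := by
        gcongr
        exact Gamma_one_add_half_pow_four_le n
    _ = (n ! : ℝ) ^ 2 * (((n : ℝ) + 1) ^ 5 * π / (2 * (π * (n + 1)) ^ (2 * n))) := by
        simp only [pow_mul, div_pow]
        field_simp
        ring
    _ ≤ (n ! : ℝ) ^ 2 * ((n ! : ℝ) ^ 2 / (n : ℝ) ^ (4 * n)) := by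
        exact mul_le_mul_of_nonneg_left (hnumeric.trans hstirling) (by positivity)
    _ = (n ! / (n : ℝ) ^ n) ^ 4 := by ring

theorem sphere_bound_le_parallelepiped_bound_general (n s : ℕ) (hn : 56 ≤ n)
    (V : Fin (n + 1) → EuclideanSpace ℝ (Fin n))
    (hV : ∀ i j, i ≠ j → dist (V i) (V j) = 2) :
    rogersRatio V * (4 / (π * n)) ^ ((n : ℝ) / 2) * Real.Gamma (1 + (n : ℝ) / 2) ≤
      ((Nat.factorial n : ℝ) / (n : ℝ) ^ n) * (4 / π) ^ s := by
  have hGamma : 0 ≤ Gamma (1 + (n : ℝ) / 2) := (Gamma_pos_of_pos (by positivity)).le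
  calc rogersRatio V * (4 / (π * n)) ^ ((n : ℝ) / 2) * Gamma (1 + (n : ℝ) / 2)
      ≤ (n + 1) * √(n / (2 * (n + 1))) ^ n * (4 / (π * n)) ^ ((n : ℝ) / 2) *
          Gamma (1 + n / 2) := by
        gcongr
        exact rogersRatio_le (by omega) hV
    _ = (n + 1) * √(2 / (π * (n + 1))) ^ n * Gamma (1 + n / 2) := by
        rw [mul_assoc _ (√_ ^ n), sqrt_pow_mul_rpow_eq]
    _ ≤ n ! / (n : ℝ) ^ n := add_one_mul_sqrt_pow_mul_Gamma_le hn
    _ ≤ _ := le_mul_of_one_le_right (by positivity)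
        (one_le_pow₀ ((one_le_div pi_pos).2 pi_le_four))

/-- For all `n ≥ 56` and all `0 ≤ 2s ≤ n`, the centre-packing bound coming from the sphere
does not exceed that coming from the parallelepiped:
`σ_n (4/(πn))^{n/2} Γ(1 + n/2) ≤ (n!/nⁿ)(4/π)^s`. -/
theorem sphere_bound_le_parallelepiped_bound (n s : ℕ) (hn : 56 ≤ n) (hs : 2 * s ≤ n)
    (V : Fin (n + 1) → EuclideanSpace ℝ (Fin n))
    (hV : ∀ i j, i ≠ j → dist (V i) (V j) = 2) :
    rogersRatio V * (4 / (π * n)) ^ ((n : ℝ) / 2) * Real.Gamma (1 + (n : ℝ) / 2) ≤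
      ((Nat.factorial n : ℝ) / (n : ℝ) ^ n) * (4 / π) ^ s :=
  sphere_bound_le_parallelepiped_bound_general n s hn V hV
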